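/- arXiv:1902.05145 — 2 statements merged into one kernel-verified Lean document; each statement's English description precedes it below -/
import Mathlib

section
/- Suppose f_l, f_r : (q_min, ∞) → ℝ are continuous strictly increasing functions with f_l(q) + f_r(q) → +∞ as q → +∞. Then the stress function f(q) = f_l(q) + f_r(q) + u_r − u_l has a unique zero q* ∈ (q_min, ∞) if and only if u_r − u_l < −f_l(q_min⁺) − f_r(q_min⁺), i.e. the limit of −(f_l + f_r) at q_min from the right exceeds u_r − u_l. -/
/-- existence and uniqueness of the zero of the stress function
f(q) = f_l(q) + f_r(q) + u_r − u_l, iff u_r − u_l is below minus the right limit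
of f_l + f_r at q_min. -/
theorem stmt12 (qmin ul ur L : ℝ) (fl fr : ℝ → ℝ)
    (hfl : StrictMonoOn fl (Set.Ioi qmin)) (hfr : StrictMonoOn fr (Set.Ioi qmin))
    (hcont : ContinuousOn (fun q => fl q + fr q) (Set.Ioi qmin))
    (htop : Filter.Tendsto (fun q => fl q + fr q) Filter.atTop Filter.atTop)
    (hlim : Filter.Tendsto (fun q => fl q + fr q)
        (nhdsWithin qmin (Set.Ioi qmin)) (nhds L)) :
    (∃! q, q ∈ Set.Ioi qmin ∧ fl q + fr q + ur - ul = 0) ↔ ur - ul < -L := by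
  have hg : StrictMonoOn (fun q => fl q + fr q) (Set.Ioi qmin) :=
    fun a ha b hb h => add_lt_add (hfl ha hb h) (hfr ha hb h)
  have key : ∀ q ∈ Set.Ioi qmin, L < fl q + fr q := by
    intro q hq
    have hq' : qmin < q := hq
    set q' := (qmin + q) / 2 with hq'def
    have h1 : qmin < q' := by simp only [hq'def]; linarith
    have h2 : q' < q := by simp only [hq'def]; linarith
    have hle : L ≤ fl q' + fr q' := by
      refine le_of_tendsto hlim ?_
      filter_upwards [self_mem_nhdsWithin,
        mem_nhdsWithin_of_mem_nhds (Iio_mem_nhds h1)] with x hx hx'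
      exact le_of_lt (hg hx h1 hx')
    exact lt_of_le_of_lt hle (hg h1 hq h2)
  constructor
  · rintro ⟨q, ⟨hq, heq⟩, -⟩
    have := key q hq
    linarith
  · intro h
    have hc : L < ul - ur := by linarith
    obtain ⟨a, ha1, ha2⟩ :=
      ((hlim.eventually (gt_mem_nhds hc)).and self_mem_nhdsWithin).exists
    obtain ⟨b, hb1, hb2⟩ :=
      ((htop.eventually_gt_atTop (ul - ur)).and (Filter.eventually_ge_atTop a)).exists
    have hab : Set.Icc a b ⊆ Set.Ioi qmin := fun x hx => lt_of_lt_of_le ha2 hx.1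
    obtain ⟨q, hqmem, hqeq⟩ :=
      intermediate_value_Icc hb2 (hcont.mono hab)
        ⟨le_of_lt ha1, le_of_lt hb1⟩
    have hqIoi : q ∈ Set.Ioi qmin := hab hqmem
    have hqeq' : fl q + fr q = ul - ur := hqeq
    refine ⟨q, ⟨hqIoi, by linarith⟩, ?_⟩
    rintro y ⟨hy, heq⟩
    exact hg.injOn hy hqIoi (show fl y + fr y = fl q + fr q by linarith)
end

section
/- For the JWL equation of state with cold pressure h(ρ) = A₁(1 − ωρ/(R₁ρ₀))exp(−R₁ρ₀/ρ) + A₂(1 − ωρ/(R₂ρ₀))exp(−R₂ρ₀/ρ), the second derivative h''(ρ) is nonnegative whenever 0 < ρ ≤ R₁ρ₀/(2 + ω + α), where α = (A₂R₂²/(A₁R₁(R₁−R₂))) exp(((2+ω)(R₁−R₂) − R₂)/R₂). -/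
/-!
Each summand `A (1 - ω r / c) exp (-c / r)` of the cold pressure has second derivative
`A u (u - 2 - ω) exp (-u) / r²` with `u = c / r`. Writing `ν = ρ₀ / ρ` and factoring out
`ν exp (-R₁ ν) / ρ² ≥ 0`, the sign of `h''(ρ)` is that of `A₁R₁(R₁ν - 2 - ω) - G(ν)` with
`G(ν) = A₂R₂(2 + ω - R₂ν) exp ((R₁ - R₂) ν)`. From `1 + x ≤ exp x`, the function
`t ↦ (s - q t) exp t` is at most `q exp (s / q - 1)`, so `G ≤ A₁R₁α`; and the bound on `ρ`
says precisely `R₁ν ≥ 2 + ω + α`.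
-/

open Real Filter Topology

theorem deriv_deriv_eq_of_eventually_hasDerivAt {𝕜 F : Type*} [NontriviallyNormedField 𝕜]
    [NormedAddCommGroup F] [NormedSpace 𝕜 F] {f f' : 𝕜 → F} {f'' : F} {x : 𝕜}
    (hf : ∀ᶠ y in 𝓝 x, HasDerivAt f (f' y) y) (hf' : HasDerivAt f' f'' x) :
    deriv (deriv f) x = f'' := by
  have hderiv : deriv f =ᶠ[𝓝 x] f' := hf.mono fun _ hy => hy.deriv
  rw [hderiv.deriv_eq, hf'.deriv]

theorem hasDerivAt_neg_div (c : ℝ) {r : ℝ} (hr : r ≠ 0) :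
    HasDerivAt (fun s => -(c / s)) (c / r ^ 2) r :=
  ((hasDerivAt_const r c).div (hasDerivAt_id r) hr).neg.congr_deriv (by simp [neg_div])

/-- A summand of the JWL cold pressure; `c` stands for `R ρ₀`. -/
noncomputable def jwlTerm (A ω c r : ℝ) : ℝ :=
  A * (1 - ω * r / c) * exp (-(c / r))

section jwlTerm

variable {A ω c r : ℝ}

theorem hasDerivAt_jwlTerm (hc : c ≠ 0) (hr : r ≠ 0) :
    HasDerivAt (jwlTerm A ω c) (A * exp (-(c / r)) * (c / r ^ 2 - ω / r - ω / c)) r := by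
  have hlin : HasDerivAt (fun s => A * (1 - ω * s / c)) (A * -(ω / c)) r := by
    simpa using ((((hasDerivAt_id r).const_mul ω).div_const c).const_sub 1).const_mul A
  refine (hlin.mul (hasDerivAt_neg_div c hr).exp).congr_deriv ?_
  field_simp
  ring

theorem hasDerivAt_deriv_jwlTerm (hc : c ≠ 0) (hr : r ≠ 0) :
    HasDerivAt (fun s => A * exp (-(c / s)) * (c / s ^ 2 - ω / s - ω / c))
      (A * (c / r) * (c / r - 2 - ω) * exp (-(c / r)) / r ^ 2) r := by
  have hpoly : HasDerivAt (fun s => c / s ^ 2 - ω / s - ω / c)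
      (-(2 * c / r ^ 3) + ω / r ^ 2) r := by
    refine ((((hasDerivAt_const r c).div (hasDerivAt_pow 2 r) (pow_ne_zero 2 hr)).sub
      ((hasDerivAt_const r ω).div (hasDerivAt_id r) hr)).sub_const (ω / c)).congr_deriv ?_
    simp only [id]
    field_simp
    ring
  refine (((hasDerivAt_neg_div c hr).exp.const_mul A).mul hpoly).congr_deriv ?_
  field_simp
  ring

end jwlTerm

theorem deriv_deriv_jwlTerm_add {A₁ A₂ ω c₁ c₂ r : ℝ} (hc₁ : c₁ ≠ 0) (hc₂ : c₂ ≠ 0)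
    (hr : r ≠ 0) :
    deriv (deriv fun s => jwlTerm A₁ ω c₁ s + jwlTerm A₂ ω c₂ s) r =
      (A₁ * (c₁ / r) * (c₁ / r - 2 - ω) * exp (-(c₁ / r))
        + A₂ * (c₂ / r) * (c₂ / r - 2 - ω) * exp (-(c₂ / r))) / r ^ 2 := by
  rw [add_div]
  refine deriv_deriv_eq_of_eventually_hasDerivAt ?_
    ((hasDerivAt_deriv_jwlTerm hc₁ hr).add (hasDerivAt_deriv_jwlTerm hc₂ hr))
  filter_upwards [isOpen_ne.mem_nhds hr] with s hs
  exact (hasDerivAt_jwlTerm hc₁ hs).add (hasDerivAt_jwlTerm hc₂ hs)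

theorem sub_mul_mul_exp_le (s t : ℝ) {q : ℝ} (hq : 0 < q) :
    (s - q * t) * exp t ≤ q * exp (s / q - 1) :=
  calc (s - q * t) * exp t = q * ((s / q - 1 - t + 1) * exp t) := by field_simp; ring
    _ ≤ q * (exp (s / q - 1 - t) * exp t) := by
      gcongr
      exact add_one_le_exp _
    _ = q * exp (s / q - 1) := by rw [← exp_add, sub_add_cancel]

noncomputable def jwlAlpha (A₁ A₂ ω R₁ R₂ : ℝ) : ℝ :=
  A₂ * R₂ ^ 2 / (A₁ * R₁ * (R₁ - R₂)) * exp (((2 + ω) * (R₁ - R₂) - R₂) / R₂)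

theorem mul_mul_exp_le_jwlAlpha {A₁ A₂ ω R₁ R₂ : ℝ} (hA₁ : A₁ ≠ 0) (hA₂ : 0 ≤ A₂)
    (hR₂ : 0 < R₂) (hR₁₂ : R₂ < R₁) (ν : ℝ) :
    A₂ * R₂ * (2 + ω - R₂ * ν) * exp ((R₁ - R₂) * ν) ≤ A₁ * R₁ * jwlAlpha A₁ A₂ ω R₁ R₂ := by
  have hR₁ : R₁ ≠ 0 := (hR₂.trans hR₁₂).ne'
  have hR : 0 < R₁ - R₂ := sub_pos.2 hR₁₂
  have hmax := sub_mul_mul_exp_le (2 + ω) ((R₁ - R₂) * ν) (div_pos hR₂ hR)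
  have hlhs : 2 + ω - R₂ / (R₁ - R₂) * ((R₁ - R₂) * ν) = 2 + ω - R₂ * ν := by
    field_simp
  have hexp : (2 + ω) / (R₂ / (R₁ - R₂)) - 1 = ((2 + ω) * (R₁ - R₂) - R₂) / R₂ := by
    field_simp
  rw [hlhs, hexp] at hmax
  calc A₂ * R₂ * (2 + ω - R₂ * ν) * exp ((R₁ - R₂) * ν)
      ≤ A₂ * R₂ * (R₂ / (R₁ - R₂) * exp (((2 + ω) * (R₁ - R₂) - R₂) / R₂)) := by
        rw [mul_assoc]; gcongr
    _ = A₁ * R₁ * jwlAlpha A₁ A₂ ω R₁ R₂ := by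
        unfold jwlAlpha; field_simp

theorem jwl_deriv_deriv_numerator_nonneg {A₁ A₂ ω R₁ R₂ ν : ℝ} (hA₁ : 0 < A₁) (hA₂ : 0 ≤ A₂)
    (hR₂ : 0 < R₂) (hR₁₂ : R₂ < R₁) (hν : 0 ≤ ν)
    (hle : 2 + ω + jwlAlpha A₁ A₂ ω R₁ R₂ ≤ R₁ * ν) :
    0 ≤ A₁ * (R₁ * ν) * (R₁ * ν - 2 - ω) * exp (-(R₁ * ν))
      + A₂ * (R₂ * ν) * (R₂ * ν - 2 - ω) * exp (-(R₂ * ν)) := by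
  have hR₁ : 0 < R₁ := hR₂.trans hR₁₂
  have hG := mul_mul_exp_le_jwlAlpha (ω := ω) hA₁.ne' hA₂ hR₂ hR₁₂ ν
  have hα : A₁ * R₁ * jwlAlpha A₁ A₂ ω R₁ R₂ ≤ A₁ * R₁ * (R₁ * ν - 2 - ω) := by
    gcongr; linarith
  have hsplit : A₁ * (R₁ * ν) * (R₁ * ν - 2 - ω) * exp (-(R₁ * ν))
      + A₂ * (R₂ * ν) * (R₂ * ν - 2 - ω) * exp (-(R₂ * ν)) =
      ν * exp (-(R₁ * ν)) * (A₁ * R₁ * (R₁ * ν - 2 - ω)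
        - A₂ * R₂ * (2 + ω - R₂ * ν) * exp ((R₁ - R₂) * ν)) := by
    have : exp (-(R₂ * ν)) = exp (-(R₁ * ν)) * exp ((R₁ - R₂) * ν) := by
      rw [← exp_add]; ring_nf
    rw [this]; ring
  rw [hsplit]
  exact mul_nonneg (by positivity) (by linarith)

theorem stmt15_general (A1 A2 ω R1 R2 ρ0 : ℝ)
    (hA1 : 0 < A1) (hA2 : 0 < A2)
    (hR2 : 0 < R2) (hR12 : R2 < R1) (hρ0 : 0 < ρ0) :
    ∀ ρ : ℝ, 0 < ρ →
      ρ ≤ R1 * ρ0 / (2 + ω + A2 * R2 ^ 2 / (A1 * R1 * (R1 - R2))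
            * Real.exp (((2 + ω) * (R1 - R2) - R2) / R2)) →
      0 ≤ deriv (deriv (fun r =>
        A1 * (1 - ω * r / (R1 * ρ0)) * Real.exp (-(R1 * ρ0 / r))
          + A2 * (1 - ω * r / (R2 * ρ0)) * Real.exp (-(R2 * ρ0 / r)))) ρ := by
  intro ρ hρ hle
  have hc₁ : 0 < R1 * ρ0 := mul_pos (hR2.trans hR12) hρ0
  have hc₂ : 0 < R2 * ρ0 := by positivity
  change ρ ≤ R1 * ρ0 / (2 + ω + jwlAlpha A1 A2 ω R1 R2) at hle
  have hd : 0 < 2 + ω + jwlAlpha A1 A2 ω R1 R2 :=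
    (div_pos_iff_of_pos_left hc₁).1 (hρ.trans_le hle)
  have hν : 2 + ω + jwlAlpha A1 A2 ω R1 R2 ≤ R1 * (ρ0 / ρ) := by
    rw [← mul_div_assoc]; exact (le_div_comm₀ hρ hd).1 hle
  change 0 ≤ deriv (deriv fun s => jwlTerm A1 ω (R1 * ρ0) s + jwlTerm A2 ω (R2 * ρ0) s) ρ
  rw [deriv_deriv_jwlTerm_add hc₁.ne' hc₂.ne' hρ.ne', mul_div_assoc, mul_div_assoc]
  exact div_nonneg (jwl_deriv_deriv_numerator_nonneg hA1 hA2.le hR2 hR12 (by positivity) hν) (by positivity)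

/-- for the JWL cold pressure h, h''(ρ) ≥ 0 whenever
0 < ρ ≤ R₁ρ₀/(2 + ω + α). -/
theorem stmt15 (A1 A2 ω R1 R2 ρ0 : ℝ)
    (hA1 : 0 < A1) (hA2 : 0 < A2) (hω : 0 < ω)
    (hR2 : 0 < R2) (hR12 : R2 < R1) (hρ0 : 0 < ρ0) :
    ∀ ρ : ℝ, 0 < ρ →
      ρ ≤ R1 * ρ0 / (2 + ω + A2 * R2 ^ 2 / (A1 * R1 * (R1 - R2))
            * Real.exp (((2 + ω) * (R1 - R2) - R2) / R2)) →
      0 ≤ deriv (deriv (fun r =>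
        A1 * (1 - ω * r / (R1 * ρ0)) * Real.exp (-(R1 * ρ0 / r))
          + A2 * (1 - ω * r / (R2 * ρ0)) * Real.exp (-(R2 * ρ0 / r)))) ρ :=
  stmt15_general A1 A2 ω R1 R2 ρ0 hA1 hA2 hR2 hR12 hρ0
end
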